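/- Let T be a symmetric bilinear form on Minkowski space ℝ^{1,3} with metric η = diag(-1,1,1,1). Then the following are equivalent: (a) for every future-directed causal vector V, the vector j with j^μ = -T^μ_ν V^ν satisfies η(j,j) ≤ 0 and η(j,V) ≤ 0; (b) in every orthonormal basis (e₀,e₁,e₂,e₃) with e₀ future-directed timelike, the components satisfy T₀₀ ≥ √(T₀₁² + T₀₂² + T₀₃²). -/

import Mathlib

/-!
In an orthonormal frame, completeness of the frame and symmetry of `T` give
`η(T e₀, T e₀) = -T₀₀² + T₀₁² + T₀₂² + T₀₃²`, while `η(j, j) = η(T V, T V)` and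
`η(j, V) = -V·TV` for `j = -ηTV`. Hence condition (b) in a frame is exactly the dominant energy
condition along `e₀`. Every unit future timelike vector is `e₀` of a boost frame, and the condition
is homogeneous and closed in `V`, so it passes to future timelike vectors by scaling and to future
causal vectors by continuity.
-/

open Matrix

/-- The Minkowski metric `η = diag(-1,1,1,1)` on `ℝ⁴`. -/
noncomputable def minkMatrix : Matrix (Fin 4) (Fin 4) ℝ :=
  Matrix.diagonal ![(-1 : ℝ), 1, 1, 1]

/-- The Minkowski bilinear form `η(x,y) = -x⁰y⁰ + x¹y¹ + x²y² + x³y³`. -/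
noncomputable def minkBilin (x y : Fin 4 → ℝ) : ℝ :=
  x ⬝ᵥ minkMatrix.mulVec y

open Filter Topology

lemma minkBilin_apply (x y : Fin 4 → ℝ) :
    minkBilin x y = -(x 0 * y 0) + x 1 * y 1 + x 2 * y 2 + x 3 * y 3 := by
  simp [minkBilin, minkMatrix, dotProduct, Fin.sum_univ_four, mulVec_diagonal]

lemma minkBilin_smul_left (c : ℝ) (x y : Fin 4 → ℝ) :
    minkBilin (c • x) y = c * minkBilin x y := by
  simp only [minkBilin, smul_dotProduct, smul_eq_mul]

lemma minkBilin_smul_right (c : ℝ) (x y : Fin 4 → ℝ) :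
    minkBilin x (c • y) = c * minkBilin x y := by
  simp only [minkBilin, mulVec_smul, dotProduct_smul, smul_eq_mul]

lemma minkBilin_neg_minkMatrix_mulVec_left (x y : Fin 4 → ℝ) :
    minkBilin (-(minkMatrix *ᵥ x)) y = -(x ⬝ᵥ y) := by
  simp only [minkBilin_apply, minkMatrix, Pi.neg_apply, mulVec_diagonal, cons_val_zero,
    cons_val_one, cons_val, dotProduct, Fin.sum_univ_four]
  ring

lemma minkBilin_neg_minkMatrix_mulVec_self (x : Fin 4 → ℝ) :
    minkBilin (-(minkMatrix *ᵥ x)) (-(minkMatrix *ᵥ x)) = minkBilin x x := by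
  rw [minkBilin_neg_minkMatrix_mulVec_left, dotProduct_neg, neg_neg]
  rfl

lemma minkMatrix_mul_self : minkMatrix * minkMatrix = 1 := by
  rw [minkMatrix, diagonal_mul_diagonal, ← diagonal_one]
  congr 1
  ext i
  fin_cases i <;> simp

lemma Matrix.IsSymm.dotProduct_mulVec_comm {n : Type*} [Fintype n] {R : Type*} [CommSemiring R]
    {A : Matrix n n R} (hA : A.IsSymm) (x y : n → R) : x ⬝ᵥ A *ᵥ y = y ⬝ᵥ A *ᵥ x := by
  rw [dotProduct_mulVec, ← mulVec_transpose, hA.eq, dotProduct_comm]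

/-- Turns orthonormality of the rows of `E` into a completeness relation. -/
lemma Matrix.transpose_mul_mul_self_eq_of_mul_mul_transpose_eq {n : Type*} [Fintype n]
    [DecidableEq n] {R : Type*} [CommRing R] {E J : Matrix n n R} (hJ : J * J = 1)
    (h : E * J * Eᵀ = J) : Eᵀ * J * E = J := by
  have hright : E * (J * Eᵀ * J) = 1 := by
    rw [← mul_assoc, ← mul_assoc, h, hJ]
  have hleft : J * Eᵀ * J * E = 1 := mul_eq_one_comm.mp hright
  calc Eᵀ * J * E = J * J * (Eᵀ * J * E) := by rw [hJ, one_mul]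
    _ = J * (J * Eᵀ * J * E) := by simp only [mul_assoc]
    _ = J := by rw [hleft, mul_one]

lemma minkBilin_self_eq_of_orthonormal {e : Fin 4 → Fin 4 → ℝ}
    (he : ∀ α β, minkBilin (e α) (e β) = minkMatrix α β) (w : Fin 4 → ℝ) :
    minkBilin w w = -(e 0 ⬝ᵥ w) ^ 2 + (e 1 ⬝ᵥ w) ^ 2 + (e 2 ⬝ᵥ w) ^ 2 + (e 3 ⬝ᵥ w) ^ 2 := by
  have hrows : of e * minkMatrix * (of e)ᵀ = minkMatrix := by
    ext α β
    rw [mul_mul_apply, ← he]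
    rfl
  have hcols := transpose_mul_mul_self_eq_of_mul_mul_transpose_eq minkMatrix_mul_self hrows
  calc minkBilin w w = w ⬝ᵥ ((of e)ᵀ * minkMatrix * of e) *ᵥ w := by rw [hcols]; rfl
    _ = minkBilin (of e *ᵥ w) (of e *ᵥ w) := by
      rw [minkBilin, ← mulVec_mulVec, ← mulVec_mulVec, dotProduct_mulVec, vecMul_transpose]
    _ = _ := by
      have hrow : ∀ α, (of e *ᵥ w) α = e α ⬝ᵥ w := fun _ => rfl
      rw [minkBilin_apply, hrow, hrow, hrow, hrow]
      ring

/-- The dominant energy condition for `T` along `V`, in terms of `T V` rather than of the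
current `j = -η T V`. -/
def DominantEnergyAt (T : Matrix (Fin 4) (Fin 4) ℝ) (V : Fin 4 → ℝ) : Prop :=
  minkBilin (T *ᵥ V) (T *ᵥ V) ≤ 0 ∧ 0 ≤ V ⬝ᵥ T *ᵥ V

lemma current_nonpos_iff_dominantEnergyAt (T : Matrix (Fin 4) (Fin 4) ℝ) (V : Fin 4 → ℝ) :
    (minkBilin (fun μ => -((minkMatrix * T).mulVec V μ))
        (fun μ => -((minkMatrix * T).mulVec V μ)) ≤ 0 ∧
      minkBilin (fun μ => -((minkMatrix * T).mulVec V μ)) V ≤ 0) ↔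
    DominantEnergyAt T V := by
  change minkBilin (-((minkMatrix * T) *ᵥ V)) (-((minkMatrix * T) *ᵥ V)) ≤ 0 ∧
    minkBilin (-((minkMatrix * T) *ᵥ V)) V ≤ 0 ↔ _
  rw [← mulVec_mulVec, minkBilin_neg_minkMatrix_mulVec_self,
    minkBilin_neg_minkMatrix_mulVec_left, neg_nonpos, dotProduct_comm]
  rfl

lemma dominantEnergyAt_iff_of_orthonormal {T : Matrix (Fin 4) (Fin 4) ℝ} (hT : T.IsSymm)
    {e : Fin 4 → Fin 4 → ℝ} (he : ∀ α β, minkBilin (e α) (e β) = minkMatrix α β) :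
    DominantEnergyAt T (e 0) ↔
      √((e 0 ⬝ᵥ T *ᵥ e 1) ^ 2 + (e 0 ⬝ᵥ T *ᵥ e 2) ^ 2 + (e 0 ⬝ᵥ T *ᵥ e 3) ^ 2)
        ≤ e 0 ⬝ᵥ T *ᵥ e 0 := by
  rw [DominantEnergyAt, minkBilin_self_eq_of_orthonormal he, hT.dotProduct_mulVec_comm (e 1),
    hT.dotProduct_mulVec_comm (e 2), hT.dotProduct_mulVec_comm (e 3), Real.sqrt_le_iff]
  constructor <;> rintro ⟨h₁, h₂⟩ <;> constructor <;> linarith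

lemma DominantEnergyAt.smul {T : Matrix (Fin 4) (Fin 4) ℝ} {V : Fin 4 → ℝ}
    (h : DominantEnergyAt T V) (c : ℝ) : DominantEnergyAt T (c • V) := by
  obtain ⟨h₁, h₂⟩ := h
  simp only [DominantEnergyAt, mulVec_smul, minkBilin_smul_left, minkBilin_smul_right,
    smul_dotProduct, dotProduct_smul, smul_eq_mul, ← mul_assoc]
  exact ⟨mul_nonpos_of_nonneg_of_nonpos (mul_self_nonneg c) h₁, mul_nonneg (mul_self_nonneg c) h₂⟩

lemma isClosed_setOf_dominantEnergyAt (T : Matrix (Fin 4) (Fin 4) ℝ) :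
    IsClosed {V | DominantEnergyAt T V} := by
  have hcont : Continuous fun V => minkBilin (T *ᵥ V) (T *ᵥ V) := by unfold minkBilin; fun_prop
  have hcont' : Continuous fun V => V ⬝ᵥ T *ᵥ V := by fun_prop
  exact (isClosed_le hcont continuous_const).inter (isClosed_le continuous_const hcont')

/-- The image of the standard basis under the pure boost taking `(1,0,0,0)` to the unit
vector `u`. -/
noncomputable def boostFrame (u : Fin 4 → ℝ) : Fin 4 → Fin 4 → ℝ := fun α =>
  if α = 0 then u else Pi.single α 1 + (u α / (1 + u 0)) • (u + Pi.single 0 1)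

lemma boostFrame_zero (u : Fin 4 → ℝ) : boostFrame u 0 = u := rfl

lemma boostFrame_orthonormal {u : Fin 4 → ℝ} (hu0 : 0 < u 0) (huu : minkBilin u u = -1)
    (α β : Fin 4) : minkBilin (boostFrame u α) (boostFrame u β) = minkMatrix α β := by
  rw [minkBilin_apply] at huu
  have : 1 + u 0 ≠ 0 := by positivity
  fin_cases α <;> fin_cases β <;> simp [minkBilin_apply, boostFrame, minkMatrix] <;> grind

lemma dominantEnergyAt_of_timelike {T : Matrix (Fin 4) (Fin 4) ℝ}
    (hunit : ∀ u, minkBilin u u = -1 → 0 < u 0 → DominantEnergyAt T u)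
    {W : Fin 4 → ℝ} (hWW : minkBilin W W < 0) (hW0 : 0 < W 0) : DominantEnergyAt T W := by
  set l := √(-minkBilin W W)
  have hl : 0 < l := Real.sqrt_pos.mpr (neg_pos.mpr hWW)
  set u := l⁻¹ • W
  have hu0 : 0 < u 0 := mul_pos (inv_pos.mpr hl) hW0
  have huu : minkBilin u u = -1 := by
    have hll : l ^ 2 = -minkBilin W W := Real.sq_sqrt (neg_nonneg.mpr hWW.le)
    rw [minkBilin_smul_left, minkBilin_smul_right]
    field_simp
    linarith
  simpa [u, smul_smul, hl.ne'] using (hunit u huu hu0).smul l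

/-- `V` is the limit of the future timelike vectors `V + t (1,0,0,0)` as `t → 0⁺`. -/
lemma mem_of_causal_of_isClosed {s : Set (Fin 4 → ℝ)} (hs : IsClosed s)
    (h : ∀ W, minkBilin W W < 0 → 0 < W 0 → W ∈ s)
    {V : Fin 4 → ℝ} (hVV : minkBilin V V ≤ 0) (hV0 : 0 ≤ V 0) : V ∈ s := by
  let W : ℝ → Fin 4 → ℝ := fun t => V + t • Pi.single 0 1
  have hW : Tendsto W (𝓝[>] 0) (𝓝 V) := by
    apply tendsto_nhdsWithin_of_tendsto_nhds
    exact (by fun_prop : Continuous W).tendsto' 0 V (by simp [W])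
  refine hs.mem_of_tendsto hW (eventually_nhdsWithin_of_forall fun t (ht : 0 < t) => h _ ?_ ?_)
  · rw [minkBilin_apply] at hVV ⊢
    simp only [W, Pi.add_apply, Pi.smul_apply, smul_eq_mul, Pi.single_eq_same, ne_eq,
      Fin.reduceEq, one_ne_zero, not_false_eq_true, Pi.single_eq_of_ne, mul_one, mul_zero, add_zero]
    nlinarith
  · simp only [W, Pi.add_apply, Pi.smul_apply, Pi.single_eq_same, smul_eq_mul, mul_one]
    linarith

/-- For a symmetric bilinear form `T` on Minkowski space, the Dominant Energy
Condition (for every future-directed causal `V`, the vector `j^μ = -T^μ_ν V^ν` satisfies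
`η(j,j) ≤ 0` and `η(j,V) ≤ 0`) is equivalent to: in every orthonormal basis `(e₀,e₁,e₂,e₃)`
with `e₀` future-directed, `T₀₀ ≥ √(T₀₁² + T₀₂² + T₀₃²)`. -/
theorem stmt_1 (T : Matrix (Fin 4) (Fin 4) ℝ) (hT : T.IsSymm) :
    (∀ V : Fin 4 → ℝ, minkBilin V V ≤ 0 → 0 < V 0 →
        minkBilin (fun μ => -((minkMatrix * T).mulVec V μ))
            (fun μ => -((minkMatrix * T).mulVec V μ)) ≤ 0 ∧
        minkBilin (fun μ => -((minkMatrix * T).mulVec V μ)) V ≤ 0)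
    ↔
    (∀ e : Fin 4 → Fin 4 → ℝ,
        (∀ α β, minkBilin (e α) (e β) = minkMatrix α β) → 0 < e 0 0 →
        Real.sqrt ((e 0 ⬝ᵥ T.mulVec (e 1)) ^ 2 + (e 0 ⬝ᵥ T.mulVec (e 2)) ^ 2
            + (e 0 ⬝ᵥ T.mulVec (e 3)) ^ 2)
          ≤ e 0 ⬝ᵥ T.mulVec (e 0)) := by
  simp only [current_nonpos_iff_dominantEnergyAt]
  constructor
  · intro h e he he0
    have he00 : minkBilin (e 0) (e 0) ≤ 0 := by simp [he, minkMatrix]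
    exact (dominantEnergyAt_iff_of_orthonormal hT he).1 (h (e 0) he00 he0)
  · intro hb V hVV hV0
    have hunit (u : Fin 4 → ℝ) (huu : minkBilin u u = -1) (hu0 : 0 < u 0) :
        DominantEnergyAt T u := by
      have hon := boostFrame_orthonormal hu0 huu
      rw [← boostFrame_zero u] at hu0 ⊢
      exact (dominantEnergyAt_iff_of_orthonormal hT hon).2 (hb _ hon hu0)
    exact mem_of_causal_of_isClosed (isClosed_setOf_dominantEnergyAt T)
      (fun W hWW hW0 => dominantEnergyAt_of_timelike hunit hWW hW0) hVV hV0.le
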